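/- Let C ≥ 1, A, γ, σ > 0 and b ∈ Σ(C,A,γ,σ) with invariant density q_b. Then for every integer n ≥ 2 the integrals ∫_ℝ |x|^{n−2}·x·b(x)·q_b(x) dx and ∫_ℝ |x|^{n−2}·q_b(x) dx are absolutely convergent and satisfy n·∫_ℝ |x|^{n−2}·x·b(x)·q_b(x) dx + (n(n−1)/2)·σ²·∫_ℝ |x|^{n−2}·q_b(x) dx = 0. -/

import Mathlib

/-!
Write `h = 2b/σ²` and `F x = exp (∫₀ˣ h)`, so that `q_b = F / C_{b,σ}` and `F' = h F`. Since
`x ↦ |x|ᵏ x` is `C¹` with derivative `(k + 1) |x|ᵏ`,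
`(|x|ᵏ x F)' = (k + 1) |x|ᵏ F + |x|ᵏ x h F`.
The confinement condition `h ≤ -2γ` on `[A, ∞)` and `h ≥ 2γ` on `(-∞, -A]` makes `F` decay
like `exp (-2γ |x|)`, so all these functions are integrable, and a derivative that is integrable
together with its primitive integrates to zero over `ℝ`. Taking `k = n - 2` gives the identity.
-/

open MeasureTheory

/-- The paper's class `Lip_loc(ℝ)` of locally Lipschitz functions. -/
def LipLoc (f : ℝ → ℝ) : Prop :=
  ∀ n : ℕ, ∃ L : ℝ, ∀ x y : ℝ, |x| ≤ n → |y| ≤ n → |f x - f y| ≤ L * |x - y|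

/-- The drift class `Σ(C, A, γ, σ)`. -/
def driftClass (C A γ σ : ℝ) : Set (ℝ → ℝ) :=
  {b | LipLoc b ∧ (∀ x : ℝ, |b x| ≤ C * (1 + |x|)) ∧
    ∀ x : ℝ, A ≤ |x| → b x * Real.sign x / σ ^ 2 ≤ -γ}

/-- The normalizing constant `C_{b,σ} = ∫_ℝ exp(∫₀ˣ 2 b(u)/σ² du) dx`. -/
noncomputable def normConst (b : ℝ → ℝ) (σ : ℝ) : ℝ :=
  ∫ x : ℝ, Real.exp (∫ u in (0:ℝ)..x, 2 * b u / σ ^ 2)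

/-- The invariant density `q_b(x) = C_{b,σ}⁻¹ exp(∫₀ˣ 2 b(u)/σ² du)`. -/
noncomputable def invDensity (b : ℝ → ℝ) (σ : ℝ) (x : ℝ) : ℝ :=
  (normConst b σ)⁻¹ * Real.exp (∫ u in (0:ℝ)..x, 2 * b u / σ ^ 2)

open Real Set Filter Asymptotics

theorem LipLoc.continuous {f : ℝ → ℝ} (hf : LipLoc f) : Continuous f := by
  refine continuous_iff_continuousAt.2 fun x => ?_
  obtain ⟨n, hn⟩ := exists_nat_gt |x|
  obtain ⟨L, hL⟩ := hf n
  have hlip : LipschitzOnWith L.toNNReal f (Metric.closedBall 0 n) := by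
    refine LipschitzOnWith.of_dist_le_mul fun y hy z hz => ?_
    simp only [Metric.mem_closedBall, dist_eq, sub_zero] at hy hz ⊢
    exact (hL y z hy hz).trans (by gcongr; exact le_coe_toNNReal L)
  exact hlip.continuousOn.continuousAt
    (Metric.closedBall_mem_nhds_of_mem (by simpa [dist_eq] using hn))

theorem hasDerivAt_abs_pow_mul_self (k : ℕ) (x : ℝ) :
    HasDerivAt (fun y : ℝ => |y| ^ k * y) ((k + 1) * |x| ^ k) x := by
  have hpos : HasDerivAt (fun y : ℝ => y ^ (k + 1)) ((k + 1) * x ^ k) x := by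
    simpa using hasDerivAt_pow (k + 1) x
  have hneg : HasDerivAt (fun y : ℝ => -(-y) ^ (k + 1)) ((k + 1) * (-x) ^ k) x := by
    simpa using ((hasDerivAt_neg x).pow (k + 1)).fun_neg
  have eq_pos : EqOn (fun y : ℝ => |y| ^ k * y) (fun y => y ^ (k + 1)) (Ici 0) := fun y hy => by
    simp [abs_of_nonneg (show (0:ℝ) ≤ y from hy), pow_succ]
  have eq_neg : EqOn (fun y : ℝ => |y| ^ k * y) (fun y => -(-y) ^ (k + 1)) (Iic 0) := fun y hy => by
    simp [abs_of_nonpos (show y ≤ (0:ℝ) from hy), pow_succ]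
  rcases lt_trichotomy x 0 with hx | rfl | hx
  · rw [abs_of_neg hx]
    exact hneg.congr_of_eventuallyEq (eventually_of_mem (Iic_mem_nhds hx) eq_neg)
  · have := (hpos.hasDerivWithinAt.congr eq_pos (by simp)).union
      (hneg.hasDerivWithinAt.congr eq_neg (by simp) |>.congr_deriv (by simp))
    simpa [Ici_union_Iic] using this
  · rw [abs_of_pos hx]
    exact hpos.congr_of_eventuallyEq (eventually_of_mem (Ici_mem_nhds hx) eq_pos)

theorem isBigO_abs_pow_exp_mul_atTop (m : ℕ) {b : ℝ} (hb : 0 < b) :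
    (fun x : ℝ => |x| ^ m) =O[atTop] fun x => exp (b * x) :=
  (isLittleO_pow_exp_pos_mul_atTop m hb).isBigO.congr'
    (eventually_ge_atTop 0 |>.mono fun x hx => by simp only [abs_of_nonneg hx]) EventuallyEq.rfl

theorem isBigO_abs_pow_exp_mul_atBot (m : ℕ) {b : ℝ} (hb : 0 < b) :
    (fun x : ℝ => |x| ^ m) =O[atBot] fun x => exp (-b * x) := by
  simpa [Function.comp_def] using
    (isBigO_abs_pow_exp_mul_atTop m hb).comp_tendsto tendsto_neg_atBot_atTop

noncomputable def expPrimitive (h : ℝ → ℝ) (x : ℝ) : ℝ :=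
  exp (∫ u in (0:ℝ)..x, h u)

namespace expPrimitive

variable {h : ℝ → ℝ} {A c : ℝ}

theorem hasDerivAt (hh : Continuous h) (x : ℝ) :
    HasDerivAt (expPrimitive h) (h x * expPrimitive h x) x := by
  unfold expPrimitive
  simpa [mul_comm] using (hh.integral_hasStrictDerivAt 0 x).hasDerivAt.exp

theorem continuous (hh : Continuous h) : Continuous (expPrimitive h) :=
  continuous_iff_continuousAt.2 fun x => (hasDerivAt hh x).continuousAt

theorem pos (x : ℝ) : 0 < expPrimitive h x := exp_pos _

theorem le_of_le {a x : ℝ} (hh : Continuous h) (hax : a ≤ x) (hc : ∀ u ∈ Icc a x, h u ≤ -c) :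
    expPrimitive h x ≤ expPrimitive h a * exp (-c * (x - a)) := by
  have hsplit := intervalIntegral.integral_add_adjacent_intervals
    (hh.intervalIntegrable (μ := volume) 0 a) (hh.intervalIntegrable a x)
  have hle : ∫ u in a..x, h u ≤ -c * (x - a) := by
    simpa [mul_comm] using intervalIntegral.integral_mono_on hax
      (hh.intervalIntegrable (μ := volume) a x) intervalIntegrable_const hc
  rw [expPrimitive, expPrimitive, ← exp_add, exp_le_exp, ← hsplit]
  linarith

theorem le_of_ge {a x : ℝ} (hh : Continuous h) (hxa : x ≤ a) (hc : ∀ u ∈ Icc x a, c ≤ h u) :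
    expPrimitive h x ≤ expPrimitive h a * exp (c * (x - a)) := by
  have hsplit := intervalIntegral.integral_add_adjacent_intervals
    (hh.intervalIntegrable (μ := volume) 0 x) (hh.intervalIntegrable x a)
  have hle : c * (a - x) ≤ ∫ u in x..a, h u := by
    simpa [mul_comm] using intervalIntegral.integral_mono_on hxa
      (intervalIntegrable_const (μ := volume)) (hh.intervalIntegrable x a) hc
  rw [expPrimitive, expPrimitive, ← exp_add, exp_le_exp, ← hsplit]
  linarith

theorem isBigO_atTop (hh : Continuous h) (hright : ∀ x, A ≤ x → h x ≤ -c) :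
    expPrimitive h =O[atTop] fun x => exp (-c * x) := by
  refine IsBigO.of_bound (expPrimitive h A * exp (c * A)) ?_
  filter_upwards [eventually_ge_atTop A] with x hx
  rw [norm_of_nonneg (pos x).le, norm_of_nonneg (exp_pos _).le, mul_assoc, ← exp_add]
  convert le_of_le hh hx fun u hu => hright u hu.1 using 3
  ring

theorem isBigO_atBot (hh : Continuous h) (hleft : ∀ x, x ≤ -A → c ≤ h x) :
    expPrimitive h =O[atBot] fun x => exp (c * x) := by
  refine IsBigO.of_bound (expPrimitive h (-A) * exp (c * A)) ?_
  filter_upwards [eventually_le_atBot (-A)] with x hx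
  rw [norm_of_nonneg (pos x).le, norm_of_nonneg (exp_pos _).le, mul_assoc, ← exp_add]
  convert le_of_ge hh hx fun u hu => hleft u hu.2 using 3
  ring

end expPrimitive

section Moments

variable {h : ℝ → ℝ} {A c : ℝ}

theorem integrable_abs_pow_mul_expPrimitive (hh : Continuous h) (hc : 0 < c)
    (hright : ∀ x, A ≤ x → h x ≤ -c) (hleft : ∀ x, x ≤ -A → c ≤ h x) (m : ℕ) :
    Integrable (fun x => |x| ^ m * expPrimitive h x) := by
  have hc2 : 0 < c / 2 := half_pos hc
  refine ((continuous_abs.pow m).mul (expPrimitive.continuous hh)).locallyIntegrable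
    |>.integrable_of_isBigO_atBot_atTop (g := fun x => exp (c / 2 * x))
      (g' := fun x => exp (-(c / 2) * x)) ?_ ?_ ?_ ?_
  · refine ((isBigO_abs_pow_exp_mul_atBot m hc2).mul
      (expPrimitive.isBigO_atBot hh hleft)).congr_right fun x => ?_
    rw [← exp_add]; ring_nf
  · exact ⟨Iic 0, Iic_mem_atBot 0, integrableOn_exp_mul_Iic hc2 0⟩
  · refine ((isBigO_abs_pow_exp_mul_atTop m hc2).mul
      (expPrimitive.isBigO_atTop hh hright)).congr_right fun x => ?_
    rw [← exp_add]; ring_nf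
  · exact ⟨Ioi 0, Ioi_mem_atTop 0, integrableOn_exp_mul_Ioi (by linarith) 0⟩

theorem integrable_abs_pow_mul_self_mul_mul_expPrimitive {g : ℝ → ℝ} {K : ℝ}
    (hh : Continuous h) (hc : 0 < c) (hright : ∀ x, A ≤ x → h x ≤ -c)
    (hleft : ∀ x, x ≤ -A → c ≤ h x) (hg : Continuous g) (hgK : ∀ x, |g x| ≤ K * (1 + |x|))
    (k : ℕ) : Integrable (fun x => |x| ^ k * x * g x * expPrimitive h x) := by
  have hint m := integrable_abs_pow_mul_expPrimitive hh hc hright hleft m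
  have hF := expPrimitive.continuous hh
  refine Integrable.mono' (((hint (k + 1)).add (hint (k + 2))).const_mul K)
    (Continuous.aestronglyMeasurable (by fun_prop)) (Eventually.of_forall fun x => ?_)
  have hFx := (expPrimitive.pos (h := h) x).le
  calc ‖|x| ^ k * x * g x * expPrimitive h x‖ = |x| ^ (k + 1) * |g x| * expPrimitive h x := by
        rw [norm_eq_abs, abs_mul, abs_mul, abs_mul, abs_pow, abs_abs, abs_of_nonneg hFx, pow_succ]
    _ ≤ |x| ^ (k + 1) * (K * (1 + |x|)) * expPrimitive h x := by gcongr; exact hgK x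
    _ = K * (|x| ^ (k + 1) * expPrimitive h x + |x| ^ (k + 2) * expPrimitive h x) := by ring

theorem integral_abs_pow_mul_self_mul_mul_expPrimitive {K : ℝ} (hh : Continuous h) (hc : 0 < c)
    (hright : ∀ x, A ≤ x → h x ≤ -c) (hleft : ∀ x, x ≤ -A → c ≤ h x)
    (hhK : ∀ x, |h x| ≤ K * (1 + |x|)) (k : ℕ) :
    ∫ x, |x| ^ k * x * h x * expPrimitive h x = -((k + 1) * ∫ x, |x| ^ k * expPrimitive h x) := by
  have hpow := integrable_abs_pow_mul_expPrimitive hh hc hright hleft k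
  have hdrift := integrable_abs_pow_mul_self_mul_mul_expPrimitive hh hc hright hleft hh hhK k
  have hself : Integrable (fun x => |x| ^ k * x * expPrimitive h x) := by
    simpa using integrable_abs_pow_mul_self_mul_mul_expPrimitive hh hc hright hleft
      continuous_const (g := fun _ => 1) (K := 1) (fun x => by simp) k
  have hderiv x : HasDerivAt (fun y => |y| ^ k * y * expPrimitive h y)
      ((k + 1) * (|x| ^ k * expPrimitive h x) + |x| ^ k * x * h x * expPrimitive h x) x :=
    ((hasDerivAt_abs_pow_mul_self k x).fun_mul (expPrimitive.hasDerivAt hh x)).congr_deriv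
      (by ring)
  have := integral_eq_zero_of_hasDerivAt_of_integrable hderiv
    ((hpow.const_mul _).add hdrift) hself
  rw [integral_add (hpow.const_mul _) hdrift, integral_const_mul] at this
  linarith

end Moments

section DriftClass

variable {C A γ σ : ℝ} {b : ℝ → ℝ}

theorem invDensity_eq (b : ℝ → ℝ) (σ : ℝ) :
    invDensity b σ = fun x => (normConst b σ)⁻¹ * expPrimitive (fun u => 2 * b u / σ ^ 2) x :=
  rfl

theorem driftClass.drift_le (hA : 0 < A) (hb : b ∈ driftClass C A γ σ) :
    ∀ x, A ≤ x → 2 * b x / σ ^ 2 ≤ -(2 * γ) := fun x hx => by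
  have := hb.2.2 x (hx.trans (le_abs_self x))
  rw [sign_of_pos (hA.trans_le hx), mul_one] at this
  linarith [mul_div_assoc 2 (b x) (σ ^ 2)]

theorem driftClass.le_drift (hA : 0 < A) (hb : b ∈ driftClass C A γ σ) :
    ∀ x, x ≤ -A → 2 * γ ≤ 2 * b x / σ ^ 2 := fun x hx => by
  have := hb.2.2 x (by rw [abs_of_neg (by linarith)]; linarith)
  rw [sign_of_neg (by linarith), mul_neg_one, neg_div] at this
  linarith [mul_div_assoc 2 (b x) (σ ^ 2)]

theorem driftClass.abs_drift_le (hσ : 0 < σ) (hb : b ∈ driftClass C A γ σ) (x : ℝ) :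
    |2 * b x / σ ^ 2| ≤ 2 * C / σ ^ 2 * (1 + |x|) := by
  rw [abs_div, abs_mul, abs_two, abs_of_pos (pow_pos hσ 2), div_mul_eq_mul_div]
  exact div_le_div_of_nonneg_right (by linarith [hb.2.1 x]) (pow_pos hσ 2).le

end DriftClass

theorem stmt3_general (C A γ σ : ℝ) (hA : 0 < A) (hγ : 0 < γ) (hσ : 0 < σ)
    (b : ℝ → ℝ) (hb : b ∈ driftClass C A γ σ) (n : ℕ) (hn : 2 ≤ n) :
    Integrable (fun x : ℝ => |x| ^ (n - 2) * x * b x * invDensity b σ x) ∧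
    Integrable (fun x : ℝ => |x| ^ (n - 2) * invDensity b σ x) ∧
    (n : ℝ) * (∫ x : ℝ, |x| ^ (n - 2) * x * b x * invDensity b σ x) +
        (n : ℝ) * ((n : ℝ) - 1) / 2 * σ ^ 2 *
          (∫ x : ℝ, |x| ^ (n - 2) * invDensity b σ x) = 0 := by
  obtain ⟨k, rfl⟩ := Nat.exists_eq_add_of_le' hn
  set F := expPrimitive (fun u => 2 * b u / σ ^ 2)
  have hbc := hb.1.continuous
  have hh : Continuous fun u => 2 * b u / σ ^ 2 := by fun_prop
  have hc : 0 < 2 * γ := by positivity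
  have hright := driftClass.drift_le hA hb
  have hleft := driftClass.le_drift hA hb
  have hmoment := integral_abs_pow_mul_self_mul_mul_expPrimitive hh hc hright hleft
    (driftClass.abs_drift_le hσ hb) k
  have hscale : ∫ x, |x| ^ k * x * (2 * b x / σ ^ 2) * F x =
      2 / σ ^ 2 * ∫ x, |x| ^ k * x * b x * F x := by
    rw [← integral_const_mul]
    congr 1 with x
    ring
  simp only [Nat.add_sub_cancel, invDensity_eq, mul_left_comm _ (normConst b σ)⁻¹,
    integral_const_mul]
  refine ⟨(integrable_abs_pow_mul_self_mul_mul_expPrimitive hh hc hright hleft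
    hbc hb.2.1 k).const_mul _,
    (integrable_abs_pow_mul_expPrimitive hh hc hright hleft k).const_mul _, ?_⟩
  rw [hscale] at hmoment
  field_simp at hmoment
  push_cast
  linear_combination (normConst b σ)⁻¹ * (k + 2) / 2 * hmoment

/-- For `n ≥ 2`, `n·E[|ξ|^{n-2} ξ b(ξ)] + (n(n-1)/2)·σ²·E[|ξ|^{n-2}] = 0` for `ξ ∼ q_b`,
including absolute convergence of both integrals. -/
theorem stmt3 (C A γ σ : ℝ) (hC : 1 ≤ C) (hA : 0 < A) (hγ : 0 < γ) (hσ : 0 < σ)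
    (b : ℝ → ℝ) (hb : b ∈ driftClass C A γ σ) (n : ℕ) (hn : 2 ≤ n) :
    Integrable (fun x : ℝ => |x| ^ (n - 2) * x * b x * invDensity b σ x) ∧
    Integrable (fun x : ℝ => |x| ^ (n - 2) * invDensity b σ x) ∧
    (n : ℝ) * (∫ x : ℝ, |x| ^ (n - 2) * x * b x * invDensity b σ x) +
        (n : ℝ) * ((n : ℝ) - 1) / 2 * σ ^ 2 *
          (∫ x : ℝ, |x| ^ (n - 2) * invDensity b σ x) = 0 :=
  stmt3_general C A γ σ hA hγ hσ b hb n hn
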